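/- arXiv:1706.00389 — 2 statements merged into one kernel-verified Lean document; each statement's English description precedes it below -/
import Mathlib

section
/- Conversely, if f : Ω → ℝ is measurable on a finite-measure set Ω and L := limsup_{p→∞} p⁻¹ ‖f‖_{L^p(Ω)} < ∞, then for every γ with 0 < γ < (L e)⁻¹ one has ∫_Ω exp(γ|f|) dx < ∞. -/
/-!
Integrating `exp (γ |f|) = ∑ (γ |f|) ^ p / p!` termwise, the `p`-th term is
`γ ^ p ‖f‖_p ^ p / p! ≤ (γ L' p) ^ p / p! ≤ (γ L' e) ^ p` for large `p`, since `p ^ p / p! ≤ e ^ p`.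
Choosing `L < L'` with `γ L' e < 1`, the series is dominated by a convergent geometric series.
-/

open MeasureTheory Filter Real
open scoped Nat

theorem le_pow_of_rpow_one_div_le {x y : ℝ} {p : ℕ} (hx : 0 ≤ x) (hp : p ≠ 0)
    (h : x ^ (1 / (p : ℝ)) ≤ y) : x ≤ y ^ p := by
  rw [one_div] at h
  calc x = (x ^ (p : ℝ)⁻¹) ^ p := (rpow_inv_natCast_pow hx hp).symm
    _ ≤ y ^ p := pow_le_pow_left₀ (rpow_nonneg hx _) h p

theorem pow_mul_div_factorial_le_of_le_pow {γ b x : ℝ} {p : ℕ} (hγ : 0 ≤ γ) (hb : 0 ≤ b)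
    (hx : x ≤ (b * p) ^ p) : γ ^ p * x / p ! ≤ (γ * b * exp 1) ^ p := by
  have hstirling : (p : ℝ) ^ p / p ! ≤ exp 1 ^ p := by
    rw [exp_one_pow]; exact pow_div_factorial_le_exp _ p.cast_nonneg p
  calc γ ^ p * x / p ! ≤ γ ^ p * (b * p) ^ p / p ! := by gcongr
    _ = (γ * b) ^ p * ((p : ℝ) ^ p / p !) := by ring
    _ ≤ (γ * b) ^ p * exp 1 ^ p := by gcongr
    _ = (γ * b * exp 1) ^ p := (mul_pow _ _ _).symm

theorem integrable_exp_of_summable_integral_pow_div_factorial {α : Type*} [MeasurableSpace α]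
    {μ : Measure α} {g : α → ℝ} (hg : ∀ x, 0 ≤ g x)
    (hint : ∀ p : ℕ, Integrable (fun x => g x ^ p) μ)
    (hsum : Summable fun p : ℕ => ∫ x, g x ^ p / p ! ∂μ) :
    Integrable (fun x => exp (g x)) μ := by
  have hterm_nonneg : ∀ p x, 0 ≤ g x ^ p / p ! := fun p x => by have := hg x; positivity
  have hterm_int : ∀ p : ℕ, Integrable (fun x => g x ^ p / p !) μ :=
    fun p => (hint p).div_const _
  refine ⟨continuous_exp.comp_aestronglyMeasurable (by simpa using (hint 1).1), ?_⟩
  rw [hasFiniteIntegral_iff_ofReal (.of_forall fun x => (exp_pos _).le)]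
  calc ∫⁻ x, ENNReal.ofReal (exp (g x)) ∂μ
      = ∫⁻ x, ∑' p : ℕ, ENNReal.ofReal (g x ^ p / p !) ∂μ := by
        refine lintegral_congr fun x => ?_
        rw [exp_eq_exp_ℝ, NormedSpace.exp_eq_tsum_div]
        exact ENNReal.ofReal_tsum_of_nonneg (hterm_nonneg · x) (summable_pow_div_factorial _)
    _ = ∑' p : ℕ, ∫⁻ x, ENNReal.ofReal (g x ^ p / p !) ∂μ :=
        lintegral_tsum fun p => (hterm_int p).1.aemeasurable.ennreal_ofReal
    _ = ∑' p : ℕ, ENNReal.ofReal (∫ x, g x ^ p / p ! ∂μ) := by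
        congr 1 with p
        exact (ofReal_integral_eq_lintegral_ofReal (hterm_int p)
          (.of_forall (hterm_nonneg p))).symm
    _ = ENNReal.ofReal (∑' p : ℕ, ∫ x, g x ^ p / p ! ∂μ) :=
        (ENNReal.ofReal_tsum_of_nonneg (fun p => integral_nonneg (hterm_nonneg p)) hsum).symm
    _ < ⊤ := ENNReal.ofReal_lt_top

theorem exp_integrable_of_lp_norm_linear_growth_general (n : ℕ) (Ω : Set (Fin n → ℝ))
    (hΩfin : volume Ω < ⊤)
    (f : (Fin n → ℝ) → ℝ)
    (hfp : ∀ p : ℕ, 1 ≤ p → IntegrableOn (fun x => |f x| ^ (p : ℝ)) Ω volume)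
    (L : ℝ)
    (hlimsup : ∀ L' : ℝ, L < L' → ∀ᶠ p : ℕ in atTop,
      (∫ x in Ω, |f x| ^ (p : ℝ)) ^ (1 / (p : ℝ)) ≤ L' * p) :
    ∀ γ : ℝ, 0 < γ → γ * (L * Real.exp 1) < 1 →
      IntegrableOn (fun x => Real.exp (γ * |f x|)) Ω volume := by
  intro γ hγ hγL
  have hγe : 0 < γ * exp 1 := by positivity
  obtain ⟨L', hLL', hL'⟩ : ∃ L', max L 0 < L' ∧ L' < 1 / (γ * exp 1) :=
    exists_between (max_lt (by rw [lt_div_iff₀ hγe]; linarith) (by positivity))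
  have hL'0 : 0 ≤ L' := (le_max_right _ _).trans hLL'.le
  have hr : γ * L' * exp 1 < 1 := by rw [lt_div_iff₀ hγe] at hL'; linarith
  have hint : ∀ p : ℕ, IntegrableOn (fun x => (γ * |f x|) ^ p) Ω := by
    rintro (_ | p)
    · simpa using hΩfin
    · simpa only [IntegrableOn, mul_pow, rpow_natCast] using
        (hfp (p + 1) p.succ_pos).const_mul (γ ^ (p + 1))
  refine integrable_exp_of_summable_integral_pow_div_factorial (fun x => by positivity) hint ?_
  refine .of_norm_bounded_eventually_nat (summable_geometric_of_lt_one (by positivity) hr) ?_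
  filter_upwards [hlimsup L' ((le_max_left _ _).trans_lt hLL'), eventually_ne_atTop 0]
    with p hp hp0
  have hterm : ∫ x in Ω, (γ * |f x|) ^ p / p ! = γ ^ p * (∫ x in Ω, |f x| ^ p) / p ! := by
    simp only [mul_pow, integral_div, integral_const_mul]
  rw [norm_of_nonneg (integral_nonneg fun x => by positivity), hterm]
  refine pow_mul_div_factorial_le_of_le_pow hγ.le hL'0 ?_
  exact le_pow_of_rpow_one_div_le (integral_nonneg fun x => by positivity) hp0
    (by simpa using hp)

/-- Conversely, if `f` is measurable on a finite-measure set `Ω` and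
`L := limsup_{p→∞} p⁻¹ ‖f‖_{L^p(Ω)} < ∞` (expressed by: for every `L' > L` one has
`‖f‖_{L^p} ≤ L' p` for all large integers `p`), then `exp (γ |f|)` is integrable
on `Ω` for every `γ > 0` with `γ L e < 1`. -/
theorem exp_integrable_of_lp_norm_linear_growth (n : ℕ) (Ω : Set (Fin n → ℝ))
    (hΩ : MeasurableSet Ω) (hΩfin : volume Ω < ⊤)
    (f : (Fin n → ℝ) → ℝ) (hf : Measurable f)
    (hfp : ∀ p : ℕ, 1 ≤ p → IntegrableOn (fun x => |f x| ^ (p : ℝ)) Ω volume)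
    (L : ℝ) (hL : 0 ≤ L)
    (hlimsup : ∀ L' : ℝ, L < L' → ∀ᶠ p : ℕ in atTop,
      (∫ x in Ω, |f x| ^ (p : ℝ)) ^ (1 / (p : ℝ)) ≤ L' * p) :
    ∀ γ : ℝ, 0 < γ → γ * (L * Real.exp 1) < 1 →
      IntegrableOn (fun x => Real.exp (γ * |f x|)) Ω volume :=
  exp_integrable_of_lp_norm_linear_growth_general n Ω hΩfin f hfp L hlimsup
end

section
/- Let Ω ⊆ ℝⁿ be bounded measurable, 1 ≤ p ≤ q ≤ ∞ with δ := 1/p − 1/q < 1/n, and f ∈ L^p(Ω). Define the Riesz potential I_Ω f(x) = ∫_Ω |x−y|^{1−n} |f(y)| dy. Then ‖I_Ω f‖_{L^q(Ω)} ≤ ((1−δ)/(1/n−δ))^{1−δ} ω_n^{1−1/n} |Ω|^{1/n−δ} ‖f‖_{L^p(Ω)}, where ω_n is the volume of the unit ball. -/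
open MeasureTheory ENNReal

noncomputable section

/-- The Riesz potential `I_Ω f (x) = ∫_Ω |x−y|^{1−n} |f(y)| dy` (ℝ≥0∞-valued). -/
def rieszPotential (n : ℕ) (Ω : Set (EuclideanSpace ℝ (Fin n)))
    (f : EuclideanSpace ℝ (Fin n) → ℝ) (x : EuclideanSpace ℝ (Fin n)) : ℝ≥0∞ :=
  ∫⁻ y in Ω, edist x y ^ ((1:ℝ) - n) * ENNReal.ofReal |f y|

/-!
Put `α = (n - 1) / (1 - δ) < n`, so that `|x - y|^{1-n} = (|x - y|^{-α})^{1-δ}`. The superlevel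
sets `{y | t ≤ |x - y|^{-α}}` are balls of measure `ω_n t^{-n/α}`; bounding their trace on `Ω` by
`min (|Ω|, ω_n t^{-n/α})` in the layer-cake formula, and splitting at the height where the two
agree, gives `∫_Ω |x - y|^{-α} dy ≤ n/(n-α) ω_n^{α/n} |Ω|^{1-α/n}` uniformly in `x`. The theorem
is then Young's inequality for the kernel `K = |x - y|^{1-n}`, whose `r`-th power for
`r = 1/(1-δ)` is `|x - y|^{-α}`: Hölder's inequality with the three exponents `1/q`, `1 - 1/p`,
`δ` applied to `K g = (K^r g^p)^{1/q} (K^r)^{1-1/p} (g^p)^δ`, followed by Tonelli.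
-/

namespace ENNReal

variable {X : Type*} [MeasurableSpace X] {μ : Measure X}

theorem lintegral_rpow_mul_rpow_mul_rpow_le {f g h : X → ℝ≥0∞}
    (hf : AEMeasurable f μ) (hg : AEMeasurable g μ) (hh : AEMeasurable h μ)
    {a b c : ℝ} (ha : 0 ≤ a) (hb : 0 ≤ b) (hc : 0 ≤ c) (habc : a + b + c = 1) :
    ∫⁻ x, f x ^ a * g x ^ b * h x ^ c ∂μ ≤
      (∫⁻ x, f x ∂μ) ^ a * (∫⁻ x, g x ∂μ) ^ b * (∫⁻ x, h x ∂μ) ^ c := by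
  simpa [Fin.prod_univ_three, mul_assoc] using lintegral_prod_norm_pow_le (μ := μ) .univ
    (f := ![f, g, h]) (fun i _ => by fin_cases i <;> assumption)
    (p := ![a, b, c]) (by simp [Fin.sum_univ_three, habc])
    (fun i _ => by fin_cases i <;> assumption)

theorem mul_eq_of_young_exponents {p q r : ℝ} (hp : 1 ≤ p) (hpq : p ≤ q) (hr : 0 < r)
    (hpqr : 1 / p + 1 / r = 1 + 1 / q) (k a : ℝ≥0∞) :
    k * a = (k ^ r * a ^ p) ^ (1 / q) * (k ^ r) ^ (1 - 1 / p) * (a ^ p) ^ (1 / p - 1 / q) := by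
  have hp0 : 0 < p := by linarith
  have hq0 : 0 < q := by linarith
  have hkr : (k ^ r) ^ (1 / q) * (k ^ r) ^ (1 - 1 / p) = k := by
    rw [← rpow_add_of_nonneg _ _ (by positivity) (by rw [sub_nonneg, div_le_one hp0]; exact hp),
      ← rpow_mul, show r * (1 / q + (1 - 1 / p)) = 1 by field_simp at hpqr ⊢; linarith, rpow_one]
  have hap : (a ^ p) ^ (1 / q) * (a ^ p) ^ (1 / p - 1 / q) = a := by
    rw [← rpow_add_of_nonneg _ _ (by positivity) (sub_nonneg.2 (one_div_le_one_div_of_le hp0 hpq)),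
      ← rpow_mul, add_sub_cancel, mul_one_div_cancel hp0.ne', rpow_one]
  rw [mul_rpow_of_nonneg _ _ (by positivity), mul_right_comm _ _ ((k ^ r) ^ _), hkr, mul_assoc, hap]

end ENNReal

section Young

variable {X : Type*} [MeasurableSpace X] {μ : Measure X} {K : X → X → ℝ≥0∞} {g : X → ℝ≥0∞}
  {p q r : ℝ} {M : ℝ≥0∞}

theorem lintegral_mul_le_of_young_exponents {x : X} (hK : Measurable (K x)) (hg : Measurable g)
    (hp : 1 ≤ p) (hpq : p ≤ q) (hr : 0 < r) (hpqr : 1 / p + 1 / r = 1 + 1 / q) :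
    ∫⁻ y, K x y * g y ∂μ ≤ (∫⁻ y, K x y ^ r * g y ^ p ∂μ) ^ (1 / q) *
      (∫⁻ y, K x y ^ r ∂μ) ^ (1 - 1 / p) * (∫⁻ y, g y ^ p ∂μ) ^ (1 / p - 1 / q) := by
  have hp0 : 0 < p := by linarith
  have hq0 : 0 < q := by linarith
  simp_rw [ENNReal.mul_eq_of_young_exponents hp hpq hr hpqr (K x _)]
  refine ENNReal.lintegral_rpow_mul_rpow_mul_rpow_le (by fun_prop) (by fun_prop) (by fun_prop)
    (by positivity) (by rw [sub_nonneg, div_le_one hp0]; exact hp)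
    (sub_nonneg.2 (one_div_le_one_div_of_le hp0 hpq)) (by ring)

theorem lintegral_lintegral_rpow_mul_le [SFinite μ] (hK : Measurable (Function.uncurry K))
    (hg : Measurable g) (hcol : ∀ y, ∫⁻ x, K x y ^ r ∂μ ≤ M) :
    ∫⁻ x, ∫⁻ y, K x y ^ r * g y ^ p ∂μ ∂μ ≤ M * ∫⁻ y, g y ^ p ∂μ := by
  rw [lintegral_lintegral_swap (by fun_prop), ← lintegral_const_mul _ (by fun_prop)]
  refine lintegral_mono fun y => ?_
  rw [lintegral_mul_const _ (by fun_prop)]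
  gcongr
  exact hcol y

theorem lintegral_rpow_lintegral_mul_le_of_young [SFinite μ]
    (hK : Measurable (Function.uncurry K)) (hg : Measurable g)
    (hp : 1 ≤ p) (hpq : p ≤ q) (hr : 0 < r) (hpqr : 1 / p + 1 / r = 1 + 1 / q)
    (hrow : ∀ x, ∫⁻ y, K x y ^ r ∂μ ≤ M) (hcol : ∀ y, ∫⁻ x, K x y ^ r ∂μ ≤ M) :
    (∫⁻ x, (∫⁻ y, K x y * g y ∂μ) ^ q ∂μ) ^ (1 / q) ≤
      M ^ (1 / r) * (∫⁻ y, g y ^ p ∂μ) ^ (1 / p) := by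
  have hp0 : 0 < p := by linarith
  have hq0 : 0 < q := by linarith
  have h1p : 0 ≤ 1 - 1 / p := by rw [sub_nonneg, div_le_one hp0]; exact hp
  have hpq' : 0 ≤ 1 / p - 1 / q := sub_nonneg.2 (one_div_le_one_div_of_le hp0 hpq)
  set F := ∫⁻ y, g y ^ p ∂μ
  have hpointwise (x : X) : (∫⁻ y, K x y * g y ∂μ) ^ q ≤
      (∫⁻ y, K x y ^ r * g y ^ p ∂μ) * (M ^ ((1 - 1 / p) * q) * F ^ ((1 / p - 1 / q) * q)) := by
    calc (∫⁻ y, K x y * g y ∂μ) ^ q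
        ≤ ((∫⁻ y, K x y ^ r * g y ^ p ∂μ) ^ (1 / q) * M ^ (1 - 1 / p) *
            F ^ (1 / p - 1 / q)) ^ q := by
          gcongr
          refine (lintegral_mul_le_of_young_exponents (by fun_prop) hg hp hpq hr hpqr).trans ?_
          gcongr
          exact hrow x
      _ = _ := by
          rw [mul_rpow_of_nonneg _ _ hq0.le, mul_rpow_of_nonneg _ _ hq0.le, ← rpow_mul, ← rpow_mul,
            ← rpow_mul, one_div_mul_cancel hq0.ne', rpow_one, mul_assoc]
  calc (∫⁻ x, (∫⁻ y, K x y * g y ∂μ) ^ q ∂μ) ^ (1 / q)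
      ≤ ((M * F) * (M ^ ((1 - 1 / p) * q) * F ^ ((1 / p - 1 / q) * q))) ^ (1 / q) := by
        gcongr
        refine (lintegral_mono hpointwise).trans ?_
        rw [lintegral_mul_const _ (by fun_prop)]
        gcongr
        exact lintegral_lintegral_rpow_mul_le hK hg hcol
    _ = (M ^ (q / r) * F ^ (q / p)) ^ (1 / q) := by
        have hqr : q / r = 1 + (1 - 1 / p) * q := by
          rw [div_eq_mul_one_div, ← add_sub_cancel_left (1 / p) (1 / r), hpqr]; field_simp; ring
        have hqp : q / p = 1 + (1 / p - 1 / q) * q := by field_simp; ring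
        rw [hqr, hqp, rpow_add_of_nonneg _ _ zero_le_one (mul_nonneg h1p hq0.le),
          rpow_add_of_nonneg _ _ zero_le_one (mul_nonneg hpq' hq0.le), rpow_one, rpow_one,
          mul_mul_mul_comm]
    _ = M ^ (1 / r) * F ^ (1 / p) := by
        rw [mul_rpow_of_nonneg _ _ (by positivity), ← rpow_mul, ← rpow_mul]
        congr 2 <;> field_simp

end Young

theorem layer_cake_bound_at_optimal_split {V w α d : ℝ} (hV : 0 < V) (hw : 0 < w) (hα : 0 < α)
    (hαd : α < d) :
    V * (w / V) ^ (α / d) + α / (d - α) * ((w / V) ^ (α / d)) ^ (1 - d / α) * w =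
      d / (d - α) * w ^ (α / d) * V ^ (1 - α / d) := by
  have hd : 0 < d := hα.trans hαd
  have h₁ : V * (w / V) ^ (α / d) = w ^ (α / d) * V ^ (1 - α / d) := by
    rw [Real.div_rpow hw.le hV.le, Real.rpow_sub hV, Real.rpow_one]; field_simp
  have h₂ : ((w / V) ^ (α / d)) ^ (1 - d / α) * w = w ^ (α / d) * V ^ (1 - α / d) := by
    rw [← Real.rpow_mul (div_pos hw hV).le, show α / d * (1 - d / α) = α / d - 1 by field_simp,
      Real.rpow_sub (div_pos hw hV), Real.rpow_one, Real.div_rpow hw.le hV.le, Real.rpow_sub hV,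
      Real.rpow_one]
    field_simp
  have hdα : d - α ≠ 0 := (sub_pos.2 hαd).ne'
  rw [mul_assoc _ _ w, h₁, h₂]
  field_simp
  ring

section RieszKernel

open Set Metric Module

variable {E : Type*} [NormedAddCommGroup E] [NormedSpace ℝ E] [FiniteDimensional ℝ E]
  [MeasurableSpace E] [BorelSpace E] (μ : Measure E) [μ.IsAddHaarMeasure]

theorem measure_setOf_le_rpow_neg_dist_le {α t : ℝ} (hα : 0 < α) (ht : 0 < t) (x : E) :
    μ {y | t ≤ dist x y ^ (-α)} ≤ ENNReal.ofReal (t ^ (-(finrank ℝ E / α))) * μ (ball 0 1) := by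
  have hsub : {y | t ≤ dist x y ^ (-α)} ⊆ closedBall x (t ^ (-α⁻¹)) := by
    intro y (hy : t ≤ dist x y ^ (-α))
    have hd : 0 < dist x y := by
      refine dist_nonneg.lt_of_ne fun h => ?_
      rw [← h, Real.zero_rpow (neg_ne_zero.2 hα.ne')] at hy
      exact ht.not_ge hy
    rw [mem_closedBall, dist_comm]
    calc dist x y = (dist x y ^ (-α)) ^ (-α⁻¹) := by
          rw [← Real.rpow_mul hd.le, neg_mul_neg, mul_inv_cancel₀ hα.ne', Real.rpow_one]
      _ ≤ t ^ (-α⁻¹) := Real.rpow_le_rpow_of_nonpos ht hy (by simp [hα.le])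
  refine (measure_mono hsub).trans_eq ?_
  rw [Measure.addHaar_closedBall _ _ (by positivity), ← Real.rpow_natCast, ← Real.rpow_mul ht.le]
  congr 3
  field_simp

theorem setLIntegral_ofReal_rpow_neg_dist_le {α t₀ : ℝ} (hα : 0 < α) (hαd : α < finrank ℝ E)
    (ht₀ : 0 < t₀) (A : Set E) (x : E) :
    ∫⁻ y in A, ENNReal.ofReal (dist x y ^ (-α)) ∂μ ≤ μ A * ENNReal.ofReal t₀ +
      ENNReal.ofReal (α / (finrank ℝ E - α) * t₀ ^ (1 - finrank ℝ E / α)) * μ (ball 0 1) := by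
  have hc : -(finrank ℝ E / α) < -1 := by
    rw [neg_lt_neg_iff, lt_div_iff₀ hα]; linarith
  have hlow : ∫⁻ t in Ioc 0 t₀, μ.restrict A {y | t ≤ dist x y ^ (-α)} ≤ μ A * ENNReal.ofReal t₀ :=
    calc ∫⁻ t in Ioc 0 t₀, μ.restrict A {y | t ≤ dist x y ^ (-α)}
        ≤ ∫⁻ _ in Ioc 0 t₀, μ A := lintegral_mono fun t =>
          (measure_mono (subset_univ _)).trans_eq (Measure.restrict_apply_univ A)
      _ = μ A * ENNReal.ofReal t₀ := by rw [setLIntegral_const, Real.volume_Ioc, sub_zero]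
  have hhigh : ∫⁻ t in Ioi t₀, μ.restrict A {y | t ≤ dist x y ^ (-α)} ≤
      ENNReal.ofReal (α / (finrank ℝ E - α) * t₀ ^ (1 - finrank ℝ E / α)) * μ (ball 0 1) :=
    calc ∫⁻ t in Ioi t₀, μ.restrict A {y | t ≤ dist x y ^ (-α)}
        ≤ ∫⁻ t in Ioi t₀, ENNReal.ofReal (t ^ (-(finrank ℝ E / α))) * μ (ball 0 1) :=
          setLIntegral_mono (by fun_prop) fun t ht => (Measure.restrict_le_self _).trans
            (measure_setOf_le_rpow_neg_dist_le μ hα (ht₀.trans ht) x)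
      _ = ENNReal.ofReal (∫ t in Ioi t₀, t ^ (-(finrank ℝ E / α))) * μ (ball 0 1) := by
          rw [lintegral_mul_const' _ _ measure_ball_lt_top.ne, ofReal_integral_eq_lintegral_ofReal
            (integrableOn_Ioi_rpow_of_lt hc ht₀)]
          filter_upwards [ae_restrict_mem measurableSet_Ioi] with t ht
          exact Real.rpow_nonneg (ht₀.trans ht).le _
      _ = _ := by
          have hc1 : -(finrank ℝ E / α) + 1 = -((finrank ℝ E - α) / α) := by field_simp; ring
          have hdα : (finrank ℝ E : ℝ) - α ≠ 0 := (sub_pos.2 hαd).ne'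
          rw [integral_Ioi_rpow_of_lt hc ht₀, hc1]
          congr 2
          field_simp
          ring_nf
  calc ∫⁻ y in A, ENNReal.ofReal (dist x y ^ (-α)) ∂μ
      = ∫⁻ t in Ioi 0, μ.restrict A {y | t ≤ dist x y ^ (-α)} :=
        lintegral_eq_lintegral_meas_le _ (ae_of_all _ fun y => by positivity) (by fun_prop)
    _ ≤ (∫⁻ t in Ioc 0 t₀, μ.restrict A {y | t ≤ dist x y ^ (-α)}) +
          ∫⁻ t in Ioi t₀, μ.restrict A {y | t ≤ dist x y ^ (-α)} := by
        rw [← Ioc_union_Ioi_eq_Ioi ht₀.le]; exact lintegral_union_le _ _ _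
    _ ≤ _ := add_le_add hlow hhigh

theorem setLIntegral_edist_rpow_neg_le {α : ℝ} (hα : 0 ≤ α) (hαd : α < finrank ℝ E) {A : Set E}
    (hA : μ A ≠ ∞) (x : E) :
    ∫⁻ y in A, edist x y ^ (-α) ∂μ ≤ ENNReal.ofReal (finrank ℝ E / (finrank ℝ E - α)) *
      μ (ball 0 1) ^ (α / finrank ℝ E) * μ A ^ (1 - α / finrank ℝ E) := by
  have hd : (0 : ℝ) < finrank ℝ E := hα.trans_lt hαd
  rcases hα.eq_or_lt with rfl | hα
  · simp [div_self hd.ne']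
  rcases eq_or_ne (μ A) 0 with hA0 | hA0
  · simp [Measure.restrict_eq_zero.2 hA0]
  have : Nontrivial E := Module.nontrivial_of_finrank_pos (R := ℝ) (by exact_mod_cast hd)
  set V := (μ A).toReal
  set w := (μ (ball (0 : E) 1)).toReal
  have hV : 0 < V := ENNReal.toReal_pos hA0 hA
  have hw : 0 < w := ENNReal.toReal_pos (measure_ball_pos μ _ one_pos).ne' measure_ball_lt_top.ne
  have hkernel : ∫⁻ y in A, edist x y ^ (-α) ∂μ =
      ∫⁻ y in A, ENNReal.ofReal (dist x y ^ (-α)) ∂μ := by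
    refine lintegral_congr_ae ?_
    filter_upwards [ae_restrict_of_ae (μ.ae_ne x)] with y hy
    rw [edist_dist, ← ENNReal.ofReal_rpow_of_pos (dist_pos.2 hy.symm)]
  rw [hkernel]
  have ht₀ : 0 < (w / V) ^ (α / finrank ℝ E) := by positivity
  refine (setLIntegral_ofReal_rpow_neg_dist_le μ hα hαd ht₀ A x).trans_eq ?_
  have hVe : μ A = ENNReal.ofReal V := (ofReal_toReal hA).symm
  have hwe : μ (ball 0 1) = ENNReal.ofReal w := (ofReal_toReal measure_ball_lt_top.ne).symm
  rw [hVe, hwe, ofReal_rpow_of_pos hw, ofReal_rpow_of_pos hV, ← ofReal_mul hV.le,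
    ← ofReal_mul (by positivity), ← ofReal_add (by positivity) (by positivity),
    ← ofReal_mul (by positivity), ← ofReal_mul (by positivity),
    layer_cake_bound_at_optimal_split hV hw hα hαd]

end RieszKernel

theorem riesz_kernel_constant_rpow_eq {n α δ : ℝ} (hn : 1 ≤ n) (hδn : δ < 1 / n)
    (hα : α * (1 - δ) = n - 1) {ω : ℝ≥0∞} (hω : ω ≠ ∞) (V : ℝ≥0∞) :
    (ENNReal.ofReal (n / (n - α)) * ω ^ (α / n) * V ^ (1 - α / n)) ^ (1 - δ) =
      ENNReal.ofReal (((1 - δ) / (1 / n - δ)) ^ (1 - δ) * ω.toReal ^ (1 - 1 / n)) *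
        V ^ (1 / n - δ) := by
  have hn1 : 1 / n ≤ 1 := (div_le_one (by positivity)).2 hn
  have hδ1 : δ < 1 := hδn.trans_le hn1
  have hnδ : 0 < 1 - n * δ := by rw [lt_div_iff₀ (by positivity)] at hδn; linarith
  have hnα : (n - α) * (1 - δ) = 1 - n * δ := by linear_combination -hα
  have hC : n / (n - α) = (1 - δ) / (1 / n - δ) := by
    rw [div_eq_div_iff (left_ne_zero_of_mul (hnα ▸ hnδ.ne')) (by linarith)]
    field_simp
    linear_combination hα
  have hexp₁ : α / n * (1 - δ) = 1 - 1 / n := by field_simp; linear_combination hα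
  have hexp₂ : (1 - α / n) * (1 - δ) = 1 / n - δ := by field_simp; linear_combination -hα
  rw [mul_rpow_of_nonneg _ _ (by linarith), mul_rpow_of_nonneg _ _ (by linarith), ← rpow_mul,
    ← rpow_mul, hexp₁, hexp₂, hC,
    ofReal_rpow_of_nonneg (div_nonneg (by linarith) (by linarith)) (by linarith),
    ofReal_mul (Real.rpow_nonneg (div_nonneg (by linarith) (by linarith)) _), toReal_rpow,
    ofReal_toReal (rpow_ne_top_of_nonneg (sub_nonneg.2 hn1) hω)]

theorem riesz_potential_estimate_general (n : ℕ) (hn : 1 ≤ n)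
    (Ω : Set (EuclideanSpace ℝ (Fin n)))
    (hΩb : Bornology.IsBounded Ω)
    (p q δ : ℝ) (hp : 1 ≤ p) (hpq : p ≤ q)
    (hδ : δ = 1 / p - 1 / q) (hδn : δ < 1 / n)
    (f : EuclideanSpace ℝ (Fin n) → ℝ) (hf : Measurable f) :
    (∫⁻ x in Ω, (rieszPotential n Ω f x) ^ q) ^ (1 / q) ≤
      ENNReal.ofReal (((1 - δ) / (1 / n - δ)) ^ (1 - δ) *
          (volume (Metric.ball (0 : EuclideanSpace ℝ (Fin n)) 1)).toReal ^ (1 - 1 / (n:ℝ))) *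
        (volume Ω) ^ ((1:ℝ) / n - δ) *
        (∫⁻ x in Ω, ENNReal.ofReal (|f x| ^ p)) ^ (1 / p) := by
  have hn' : (1 : ℝ) ≤ n := by exact_mod_cast hn
  have hp0 : 0 < p := by linarith
  have hδ1 : δ < 1 := hδn.trans_le ((div_le_one (by positivity)).2 hn')
  set α : ℝ := (n - 1) / (1 - δ)
  have hα : α * (1 - δ) = n - 1 := div_mul_cancel₀ _ (by linarith)
  have hα0 : 0 ≤ α := div_nonneg (by linarith) (by linarith)
  have hαn : α < n := by
    rw [div_lt_iff₀ (by linarith)]; nlinarith [(lt_div_iff₀ (by positivity : (0:ℝ) < n)).1 hδn]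
  set M := ENNReal.ofReal (n / (n - α)) *
    volume (Metric.ball (0 : EuclideanSpace ℝ (Fin n)) 1) ^ (α / n) * volume Ω ^ (1 - α / n)
  have hrow (x) : ∫⁻ y in Ω, edist x y ^ (-α) ≤ M := by
    simpa [finrank_euclideanSpace_fin] using
      setLIntegral_edist_rpow_neg_le volume hα0 (by simpa) hΩb.measure_lt_top.ne x
  have hK (x y : EuclideanSpace ℝ (Fin n)) :
      (edist x y ^ ((1:ℝ) - n)) ^ (1 - δ)⁻¹ = edist x y ^ (-α) := by
    rw [← ENNReal.rpow_mul, ← neg_sub, neg_mul, ← div_eq_mul_inv]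
  refine (lintegral_rpow_lintegral_mul_le_of_young (μ := volume.restrict Ω)
    (K := fun x y => edist x y ^ ((1:ℝ) - n)) (g := fun y => ENNReal.ofReal |f y|)
    (r := (1 - δ)⁻¹) (M := M) (by fun_prop) (by fun_prop) hp hpq (inv_pos.2 (by linarith))
    (by rw [hδ]; simp only [one_div, inv_inv]; ring)
    (fun x => by simp only [hK]; exact hrow x)
    (fun y => by simp only [hK, edist_comm _ y]; exact hrow y)).trans_eq ?_
  rw [one_div (1 - δ)⁻¹, inv_inv, riesz_kernel_constant_rpow_eq hn' hδn hα measure_ball_lt_top.ne]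
  simp only [ofReal_rpow_of_nonneg (abs_nonneg _) hp0.le]

/-- Riesz potential estimate (Gilbarg–Trudinger Lemma 7.12): for bounded measurable
`Ω ⊆ ℝⁿ`, `1 ≤ p ≤ q` with `δ = 1/p − 1/q < 1/n`,
`‖I_Ω f‖_{L^q(Ω)} ≤ ((1−δ)/(1/n−δ))^{1−δ} ω_n^{1−1/n} |Ω|^{1/n−δ} ‖f‖_{L^p(Ω)}`,
where `ω_n` is the volume of the unit ball. -/
theorem riesz_potential_estimate (n : ℕ) (hn : 1 ≤ n)
    (Ω : Set (EuclideanSpace ℝ (Fin n))) (hΩm : MeasurableSet Ω)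
    (hΩb : Bornology.IsBounded Ω)
    (p q δ : ℝ) (hp : 1 ≤ p) (hpq : p ≤ q)
    (hδ : δ = 1 / p - 1 / q) (hδn : δ < 1 / n)
    (f : EuclideanSpace ℝ (Fin n) → ℝ) (hf : Measurable f) :
    (∫⁻ x in Ω, (rieszPotential n Ω f x) ^ q) ^ (1 / q) ≤
      ENNReal.ofReal (((1 - δ) / (1 / n - δ)) ^ (1 - δ) *
          (volume (Metric.ball (0 : EuclideanSpace ℝ (Fin n)) 1)).toReal ^ (1 - 1 / (n:ℝ))) *
        (volume Ω) ^ ((1:ℝ) / n - δ) *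
        (∫⁻ x in Ω, ENNReal.ofReal (|f x| ^ p)) ^ (1 / p) :=
  riesz_potential_estimate_general n hn Ω hΩb p q δ hp hpq hδ hδn f hf

end
end
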